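/- arXiv:1511.08086 — 2 statements merged into one kernel-verified Lean document; each statement's English description precedes it below -/
import Mathlib

section
/- Let G and H be finite simple graphs, each with at least two vertices. If the domination number of H equals 1 (i.e., H has a dominating vertex), then the domination number of the lexicographic product G[H] equals the domination number of G. -/
/-- The lexicographic product `G[H]` of two simple graphs: `(a, x)` is adjacent to
`(b, y)` iff `a` is adjacent to `b` in `G`, or `a = b` and `x` is adjacent to `y` in `H`. -/
def lexProd {α β : Type*} (G : SimpleGraph α) (H : SimpleGraph β) :
    SimpleGraph (α × β) where
  Adj p q := G.Adj p.1 q.1 ∨ (p.1 = q.1 ∧ H.Adj p.2 q.2)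
  symm := by
    constructor
    rintro ⟨a, x⟩ ⟨b, y⟩ (h | ⟨rfl, h⟩)
    · exact Or.inl h.symm
    · exact Or.inr ⟨rfl, h.symm⟩
  loopless := by
    constructor
    rintro ⟨a, x⟩ (h | ⟨-, h⟩)
    · exact G.irrefl h
    · exact H.irrefl h

/-- `S` is a dominating set of `G`: every vertex not in `S` is adjacent to a vertex of `S`. -/
def IsDomSet {α : Type*} (G : SimpleGraph α) (S : Finset α) : Prop :=
  ∀ v, v ∉ S → ∃ u ∈ S, G.Adj u v

/-- The domination number `γ(G)`: the minimum cardinality of a dominating set of `G`. -/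
noncomputable def gamma {α : Type*} [Fintype α] (G : SimpleGraph α) : ℕ :=
  sInf {n | ∃ S : Finset α, IsDomSet G S ∧ S.card = n}

/-
Taking `S × {x₀}` for a minimum dominating set `S` of `G` and a dominating vertex `x₀` of `H`
gives `γ(G[H]) ≤ γ(G)`. Conversely, the first coordinates of a dominating set of `G[H]`
dominate `G`: a vertex `(b, y)` can only be dominated inside its own fibre (then `b` is itself
a first coordinate) or from a fibre over a neighbour of `b`.
-/

section Domination

variable {α β : Type*}

theorem isDomSet_univ [Fintype α] (G : SimpleGraph α) : IsDomSet G Finset.univ :=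
  fun v hv => absurd (Finset.mem_univ v) hv

theorem gamma_le_card [Fintype α] {G : SimpleGraph α} {S : Finset α} (hS : IsDomSet G S) :
    gamma G ≤ S.card :=
  Nat.sInf_le ⟨S, hS, rfl⟩

theorem exists_isDomSet_card_eq_gamma [Fintype α] (G : SimpleGraph α) :
    ∃ S : Finset α, IsDomSet G S ∧ S.card = gamma G :=
  Nat.sInf_mem (s := {n | ∃ S : Finset α, IsDomSet G S ∧ S.card = n})
    ⟨_, Finset.univ, isDomSet_univ G, rfl⟩

theorem nonempty_of_gamma_ne_zero [Fintype α] {G : SimpleGraph α} (h : gamma G ≠ 0) :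
    Nonempty α := by
  obtain ⟨S, -, hS⟩ := exists_isDomSet_card_eq_gamma G
  obtain ⟨v, -⟩ := Finset.card_pos.mp (by omega : 0 < S.card)
  exact ⟨v⟩

theorem IsDomSet.lexProd_product {G : SimpleGraph α} {H : SimpleGraph β} {S : Finset α}
    {T : Finset β} (hS : IsDomSet G S) (hT : IsDomSet H T) : IsDomSet (lexProd G H) (S ×ˢ T) := by
  rintro ⟨b, y⟩ hby
  by_cases hb : b ∈ S
  · have hy : y ∉ T := fun hy => hby (Finset.mem_product.mpr ⟨hb, hy⟩)
    obtain ⟨u, hu, hadj⟩ := hT y hy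
    exact ⟨(b, u), Finset.mem_product.mpr ⟨hb, hu⟩, Or.inr ⟨rfl, hadj⟩⟩
  · obtain ⟨a, ha, hab⟩ := hS b hb
    -- `T` is nonempty: otherwise it could not dominate `y`.
    obtain ⟨x, hx⟩ : T.Nonempty := by
      by_contra hT₀
      rw [Finset.not_nonempty_iff_eq_empty] at hT₀
      obtain ⟨u, hu, -⟩ := hT y (by simp [hT₀])
      simp [hT₀] at hu
    exact ⟨(a, x), Finset.mem_product.mpr ⟨ha, hx⟩, Or.inl hab⟩

theorem IsDomSet.image_fst_of_lexProd [DecidableEq α] [Nonempty β] {G : SimpleGraph α}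
    {H : SimpleGraph β} {T : Finset (α × β)} (hT : IsDomSet (lexProd G H) T) :
    IsDomSet G (T.image Prod.fst) := by
  intro b hb
  obtain ⟨y⟩ := ‹Nonempty β›
  have hbyT : (b, y) ∉ T := fun h => hb (Finset.mem_image_of_mem _ h)
  obtain ⟨⟨a, x⟩, haxT, hadj⟩ := hT (b, y) hbyT
  rcases hadj with hab | ⟨rfl, -⟩
  · exact ⟨a, Finset.mem_image_of_mem _ haxT, hab⟩
  · exact absurd (Finset.mem_image_of_mem Prod.fst haxT) hb

variable [Fintype α] [Fintype β]

theorem gamma_lexProd_le_mul (G : SimpleGraph α) (H : SimpleGraph β) :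
    gamma (lexProd G H) ≤ gamma G * gamma H := by
  obtain ⟨S, hS, hScard⟩ := exists_isDomSet_card_eq_gamma G
  obtain ⟨T, hT, hTcard⟩ := exists_isDomSet_card_eq_gamma H
  calc gamma (lexProd G H) ≤ (S ×ˢ T).card := gamma_le_card (hS.lexProd_product hT)
    _ = gamma G * gamma H := by rw [Finset.card_product, hScard, hTcard]

theorem gamma_le_gamma_lexProd [Nonempty β] (G : SimpleGraph α) (H : SimpleGraph β) :
    gamma G ≤ gamma (lexProd G H) := by
  classical
  obtain ⟨T, hT, hTcard⟩ := exists_isDomSet_card_eq_gamma (lexProd G H)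
  calc gamma G ≤ (T.image Prod.fst).card := gamma_le_card hT.image_fst_of_lexProd
    _ ≤ T.card := Finset.card_image_le
    _ = gamma (lexProd G H) := hTcard

end Domination

theorem gamma_lexProd_of_gamma_eq_one_general {α β : Type*} [Fintype α] [Fintype β]
    (G : SimpleGraph α) (H : SimpleGraph β)
    (hH : gamma H = 1) :
    gamma (lexProd G H) = gamma G := by
  have : Nonempty β := nonempty_of_gamma_ne_zero (hH ▸ one_ne_zero)
  refine le_antisymm ?_ (gamma_le_gamma_lexProd G H)
  simpa [hH] using gamma_lexProd_le_mul G H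

/-- If `G` and `H` each have at least two vertices and `γ(H) = 1`, then
`γ(G[H]) = γ(G)`. -/
theorem gamma_lexProd_of_gamma_eq_one {α β : Type*} [Fintype α] [Fintype β]
    (G : SimpleGraph α) (H : SimpleGraph β)
    (hα : 2 ≤ Fintype.card α) (hβ : 2 ≤ Fintype.card β)
    (hH : gamma H = 1) :
    gamma (lexProd G H) = gamma G :=
  gamma_lexProd_of_gamma_eq_one_general G H hH
end

section
/- Let G be a finite simple graph and let n ≥ 2 be a natural number. Then G[nK₁] is isomorphic to (nK₁)[G] if and only if G is totally disconnected (has no edges), where nK₁ denotes the edgeless graph on n vertices. -/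
namespace SimpleGraph

variable {V W : Type*}

def Iso.dartEquiv {G : SimpleGraph V} {G' : SimpleGraph W} (f : G ≃g G') :
    G.Dart ≃ G'.Dart where
  toFun := f.toHom.mapDart
  invFun := f.symm.toHom.mapDart
  left_inv d := by ext <;> simp
  right_inv d := by ext <;> simp

lemma card_dart_eq_zero_iff [Finite V] {G : SimpleGraph V} : Nat.card G.Dart = 0 ↔ G = ⊥ := by
  have : Finite G.Dart := .of_injective _ Dart.toProd_injective
  rw [Nat.card_eq_zero, or_iff_left (not_infinite_iff_finite.mpr this), isEmpty_iff]
  constructor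
  · intro h
    ext a b
    exact iff_of_false (fun hab => h ⟨(a, b), hab⟩) id
  · rintro rfl d
    exact d.adj

end SimpleGraph

section lexProd

variable {α β : Type*}

@[simp]
lemma lexProd_adj (G : SimpleGraph α) (H : SimpleGraph β) (p q : α × β) :
    (lexProd G H).Adj p q ↔ G.Adj p.1 q.1 ∨ (p.1 = q.1 ∧ H.Adj p.2 q.2) := Iff.rfl

def lexProdBotDartEquiv (G : SimpleGraph α) (β : Type*) :
    (lexProd G (⊥ : SimpleGraph β)).Dart ≃ G.Dart × (β × β) where
  toFun d := (⟨(d.fst.1, d.snd.1), d.adj.resolve_right (by simp)⟩, (d.fst.2, d.snd.2))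
  invFun e := ⟨((e.1.fst, e.2.1), (e.1.snd, e.2.2)), Or.inl e.1.adj⟩
  left_inv _ := rfl
  right_inv _ := rfl

def botLexProdDartEquiv (α : Type*) (H : SimpleGraph β) :
    (lexProd (⊥ : SimpleGraph α) H).Dart ≃ α × H.Dart where
  toFun d := (d.fst.1, ⟨(d.fst.2, d.snd.2), (d.adj.resolve_left (by simp)).2⟩)
  invFun e := ⟨((e.1, e.2.fst), (e.1, e.2.snd)), Or.inr ⟨rfl, e.2.adj⟩⟩
  left_inv d := by
    obtain ⟨⟨⟨a, x⟩, ⟨b, y⟩⟩, h⟩ := d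
    obtain rfl : a = b := (h.resolve_left (by simp)).1
    rfl
  right_inv _ := rfl

end lexProd

/-- For `n ≥ 2`, `G[nK₁] ≅ (nK₁)[G]` if and only if `G` is totally disconnected. -/
theorem lexProd_bot_comm_iff {α : Type*} [Fintype α] (G : SimpleGraph α) (n : ℕ)
    (hn : 2 ≤ n) :
    Nonempty (lexProd G (⊥ : SimpleGraph (Fin n)) ≃g lexProd (⊥ : SimpleGraph (Fin n)) G) ↔
      G = ⊥ := by
  constructor
  · rintro ⟨f⟩
    have hcard := Nat.card_congr ((lexProdBotDartEquiv G (Fin n)).symm.trans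
      (f.dartEquiv.trans (botLexProdDartEquiv (Fin n) G)))
    simp only [Nat.card_prod, Nat.card_fin] at hcard
    rw [← SimpleGraph.card_dart_eq_zero_iff]
    nlinarith [Nat.mul_le_mul_left (Nat.card G.Dart * n) hn]
  · rintro rfl
    exact ⟨⟨Equiv.prodComm α (Fin n), by simp⟩⟩
end
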